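/- arXiv:1709.06559 — 2 statements merged into one kernel-verified Lean document; each statement's English description precedes it below -/
import Mathlib

section
/- Let (L,·) be a loop, A(L) a subgroup of its automorphism group, and H(L) the A(L)-holomorph of (L,·). If H(L) is an Osborn loop, then for all x, y ∈ L and all φ ∈ A(L): (x·(y·x))·(x^λ·φ⁻¹(x)) = x·(y·φ⁻¹(x)), and (φ⁻¹(x))^λ·x = (x^λ·φ⁻¹(x))^λ. -/
/-- A loop: a set with multiplication, left and right division, and a
two-sided identity element, such that all translations are bijections
(expressed via the division operations). -/
structure Loop (L : Type*) where
  mul : L → L → L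
  ldiv : L → L → L
  rdiv : L → L → L
  e : L
  mul_ldiv : ∀ x y, mul x (ldiv x y) = y
  ldiv_mul : ∀ x y, ldiv x (mul x y) = y
  rdiv_mul : ∀ x y, mul (rdiv y x) x = y
  mul_rdiv : ∀ x y, rdiv (mul y x) x = y
  e_mul : ∀ x, mul e x = x
  mul_e : ∀ x, mul x e = x

namespace Loop

variable {L : Type*} (Q : Loop L)

/-- The left inverse `x^λ`, the unique element with `x^λ · x = e`. -/
def linv (x : L) : L := Q.rdiv Q.e x

/-- The right inverse `x^ρ`, the unique element with `x · x^ρ = e`. -/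
def rinv (x : L) : L := Q.ldiv x Q.e

/-- A loop is Osborn if `x·((y·z)·x) = (x·((y·x^λ)·x))·(z·x)` for all `x,y,z`. -/
def IsOsborn : Prop :=
  ∀ x y z, Q.mul x (Q.mul (Q.mul y z) x) =
    Q.mul (Q.mul x (Q.mul (Q.mul y (Q.linv x)) x)) (Q.mul z x)

/-- The automorphism group of a loop, as a subgroup of the permutation group. -/
def autGroup : Subgroup (Equiv.Perm L) where
  carrier := {α | ∀ x y, α (Q.mul x y) = Q.mul (α x) (α y)}
  one_mem' := fun _ _ => rfl
  mul_mem' := by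
    intro α β ha hb x y
    simp only [Equiv.Perm.mul_apply]
    rw [hb x y, ha]
  inv_mem' := by
    intro α ha x y
    apply α.injective
    rw [ha]
    simp

theorem mem_autGroup_iff {α : Equiv.Perm L} :
    α ∈ Q.autGroup ↔ ∀ x y, α (Q.mul x y) = Q.mul (α x) (α y) := Iff.rfl

theorem aut_fix_e {α : Equiv.Perm L} (hα : α ∈ Q.autGroup) : α Q.e = Q.e := by
  have h1 : α (Q.mul Q.e Q.e) = Q.mul (α Q.e) (α Q.e) := hα Q.e Q.e
  rw [Q.mul_e] at h1
  have h2 : Q.mul (α Q.e) (α Q.e) = Q.mul (α Q.e) Q.e := by rw [Q.mul_e, ← h1]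
  have h3 := congrArg (Q.ldiv (α Q.e)) h2
  rwa [Q.ldiv_mul, Q.ldiv_mul] at h3

/-- The `A`-holomorph of a loop `(L,·)`: the loop on `A × L` with multiplication
`(α,x)∘(β,y) = (α∘β, β(x)·y)`, where `A` is a subgroup of the automorphism group. -/
def Holomorph (A : Subgroup (Equiv.Perm L)) (hA : A ≤ Q.autGroup) : Loop (A × L) where
  mul p q := (p.1 * q.1, Q.mul ((q.1 : Equiv.Perm L) p.2) q.2)
  ldiv p r := (p.1⁻¹ * r.1, Q.ldiv (((p.1⁻¹ * r.1 : A) : Equiv.Perm L) p.2) r.2)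
  rdiv r q := (r.1 * q.1⁻¹, ((q.1⁻¹ : A) : Equiv.Perm L) (Q.rdiv r.2 q.2))
  e := (1, Q.e)
  mul_ldiv p r := by
    refine Prod.ext ?_ ?_
    · simp
    · simp [Q.mul_ldiv]
  ldiv_mul p q := by
    refine Prod.ext ?_ ?_
    · simp
    · simp [inv_mul_cancel_left, Q.ldiv_mul]
  rdiv_mul r q := by
    refine Prod.ext ?_ ?_
    · simp
    · simp [Q.rdiv_mul]
  mul_rdiv p q := by
    refine Prod.ext ?_ ?_
    · simp
    · simp [Q.mul_rdiv]
  e_mul p := by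
    refine Prod.ext ?_ ?_
    · simp
    · simp [Q.aut_fix_e (hA p.1.2), Q.e_mul]
  mul_e p := by
    refine Prod.ext ?_ ?_
    · simp
    · simp [Q.mul_e]

/-- A triple `(A,B,C)` of bijections of `L` is an autotopism of `(L,·)` if
`A(x)·B(y) = C(x·y)` for all `x, y`. -/
def IsAutotopism (A B C : L → L) : Prop :=
  Function.Bijective A ∧ Function.Bijective B ∧ Function.Bijective C ∧
    ∀ x y, Q.mul (A x) (B y) = C (Q.mul x y)

/-- A bijection `U` is ρ-regular if `(I,U,U)` is an autotopism. -/
def IsRhoRegular (U : L → L) : Prop := Q.IsAutotopism id U U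

/-- A bijection `U` is λ-regular if `(U,I,U)` is an autotopism. -/
def IsLambdaRegular (U : L → L) : Prop := Q.IsAutotopism U id U

/-- `U'` is an adjoint of the bijection `U` if `(U, U'⁻¹, I)` is an autotopism. -/
def IsMuAdjoint (U U' : L → L) : Prop :=
  letI : Nonempty L := ⟨Q.e⟩
  Function.Bijective U' ∧ Q.IsAutotopism U (Function.invFun U') id

/-- `U` is μ-regular if it has an adjoint, i.e. `(U, U'⁻¹, I)` is an
autotopism for some bijection `U'`. The μ-regular bijections form `Φ(L,·)`. -/
def IsMuRegular (U : L → L) : Prop := ∃ U', Q.IsMuAdjoint U U'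

/-- `U'` belongs to `Ψ(L,·)`, the group of adjoints of μ-regular bijections. -/
def IsPsi (U' : L → L) : Prop := ∃ U, Q.IsMuAdjoint U U'

/-- Membership in the left nucleus `N_λ`. -/
def InNlambda (a : L) : Prop := ∀ y z, Q.mul a (Q.mul y z) = Q.mul (Q.mul a y) z

/-- Membership in the middle nucleus `N_μ`. -/
def InNmu (a : L) : Prop := ∀ y z, Q.mul (Q.mul y a) z = Q.mul y (Q.mul a z)

/-- Membership in the right nucleus `N_ρ`. -/
def InNrho (a : L) : Prop := ∀ y z, Q.mul (Q.mul y z) a = Q.mul y (Q.mul z a)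

/-- Membership in the nucleus `N = N_λ ∩ N_μ ∩ N_ρ`. -/
def InNucleus (a : L) : Prop := Q.InNlambda a ∧ Q.InNmu a ∧ Q.InNrho a

/-- Membership in the center `Z = N ∩ C`. -/
def InCenter (a : L) : Prop := Q.InNucleus a ∧ ∀ x, Q.mul a x = Q.mul x a

end Loop

/-! Evaluating the Osborn identity of `H(L)` at elements whose automorphism components are
`1` and `φ^{±1}` gives two Osborn-type identities in `L` in which some occurrences of `x` are
replaced by `c = φ⁻¹(x)`. The first claim is one of them with `y/x^λ`, `x^λ` in place of `y`, `z`.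
For the second, pick `y` with `y·c = x^ρ`: the other twisted identity turns `x·(y·x)` into
`c^λ·x`, while the first claim turns `(x·(y·x))·(x^λ·c)` into `x·x^ρ = e`. -/

namespace Loop

variable {L : Type*} (Q : Loop L)

local infixl:70 " ⬝ " => Q.mul

theorem linv_mul (x : L) : Q.linv x ⬝ x = Q.e := Q.rdiv_mul x Q.e

theorem mul_rinv (x : L) : x ⬝ Q.rinv x = Q.e := Q.mul_ldiv x Q.e

theorem eq_linv_of_mul_eq_e {b c : L} (h : b ⬝ c = Q.e) : b = Q.linv c := by
  rw [linv, ← h, Q.mul_rdiv]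

theorem map_linv_of_mem_autGroup {α : Equiv.Perm L} (hα : α ∈ Q.autGroup) (x : L) :
    α (Q.linv x) = Q.linv (α x) :=
  Q.eq_linv_of_mul_eq_e <| by rw [← hα, Q.linv_mul, Q.aut_fix_e hα]

section Holomorph

variable {A : Subgroup (Equiv.Perm L)} (hA : A ≤ Q.autGroup)

@[simp]
theorem holomorph_mul (p q : A × L) :
    (Q.Holomorph A hA).mul p q = (p.1 * q.1, (q.1 : Equiv.Perm L) p.2 ⬝ q.2) := rfl

@[simp]
theorem holomorph_linv (p : A × L) :
    (Q.Holomorph A hA).linv p = (p.1⁻¹, ((p.1⁻¹ : A) : Equiv.Perm L) (Q.linv p.2)) := by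
  simp [linv, Holomorph]

variable {Q hA}

theorem IsOsborn.holomorph_snd (hO : (Q.Holomorph A hA).IsOsborn) (α β γ : A) (a y z : L) :
    (β : Equiv.Perm L) ((γ : Equiv.Perm L) ((α : Equiv.Perm L) a)) ⬝
        ((α : Equiv.Perm L) ((γ : Equiv.Perm L) y ⬝ z) ⬝ a) =
      (γ : Equiv.Perm L) ((α : Equiv.Perm L) ((β : Equiv.Perm L) a ⬝ (y ⬝ Q.linv a ⬝ a))) ⬝
        ((α : Equiv.Perm L) z ⬝ a) := by
  have h := congrArg Prod.snd (hO (α, a) (β, y) (γ, z))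
  simpa [hA α.2 _ _] using h

theorem IsOsborn.twisted_outer (hO : (Q.Holomorph A hA).IsOsborn) (ψ : A) (x b d : L) :
    x ⬝ (b ⬝ d ⬝ (ψ : Equiv.Perm L) x) =
      x ⬝ (b ⬝ Q.linv x ⬝ x) ⬝ (d ⬝ (ψ : Equiv.Perm L) x) := by
  have h := hO.holomorph_snd ψ⁻¹ 1 1 ((ψ : Equiv.Perm L) x) ((ψ : Equiv.Perm L) b)
    ((ψ : Equiv.Perm L) d)
  have hmul : ∀ u v, (ψ : Equiv.Perm L).symm (u ⬝ v) =
      (ψ : Equiv.Perm L).symm u ⬝ (ψ : Equiv.Perm L).symm v := hA (ψ⁻¹).2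
  have hlinv : ∀ u, (ψ : Equiv.Perm L).symm (Q.linv u) = Q.linv ((ψ : Equiv.Perm L).symm u) :=
    Q.map_linv_of_mem_autGroup (hA (ψ⁻¹).2)
  simpa [hmul, hlinv] using h

theorem IsOsborn.twisted_inner (hO : (Q.Holomorph A hA).IsOsborn) (ψ : A) (x v d : L) :
    x ⬝ (v ⬝ d ⬝ x) =
      x ⬝ (v ⬝ Q.linv ((ψ : Equiv.Perm L) x) ⬝ (ψ : Equiv.Perm L) x) ⬝ (d ⬝ x) := by
  have h := hO.holomorph_snd 1 ψ⁻¹ ψ x (((ψ⁻¹ : A) : Equiv.Perm L) v) d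
  simpa [hA ψ.2 _ _, Q.map_linv_of_mem_autGroup (hA ψ.2)] using h

theorem IsOsborn.mul_mul_linv_mul (hO : (Q.Holomorph A hA).IsOsborn) (ψ : A) (x y : L) :
    x ⬝ (y ⬝ x) ⬝ (Q.linv x ⬝ (ψ : Equiv.Perm L) x) = x ⬝ (y ⬝ (ψ : Equiv.Perm L) x) := by
  simpa [Q.rdiv_mul] using (hO.twisted_outer ψ x (Q.rdiv y (Q.linv x)) (Q.linv x)).symm

theorem IsOsborn.linv_mul_eq_linv (hO : (Q.Holomorph A hA).IsOsborn) (ψ : A) (x : L) :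
    Q.linv ((ψ : Equiv.Perm L) x) ⬝ x = Q.linv (Q.linv x ⬝ (ψ : Equiv.Perm L) x) := by
  obtain ⟨y, hy⟩ : ∃ y, y ⬝ (ψ : Equiv.Perm L) x = Q.rinv x := ⟨_, Q.rdiv_mul _ _⟩
  have hinner : x ⬝ (y ⬝ x) = Q.linv ((ψ : Equiv.Perm L) x) ⬝ x := by
    have h := hO.twisted_inner ψ x (Q.rdiv y (Q.linv ((ψ : Equiv.Perm L) x)))
      (Q.linv ((ψ : Equiv.Perm L) x))
    rwa [Q.rdiv_mul, hy, Q.mul_rinv, Q.e_mul] at h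
  have hprod : x ⬝ (y ⬝ x) ⬝ (Q.linv x ⬝ (ψ : Equiv.Perm L) x) = Q.e := by
    rw [hO.mul_mul_linv_mul, hy, Q.mul_rinv]
  exact Q.eq_linv_of_mul_eq_e (hinner ▸ hprod)

end Holomorph

end Loop

/-- If `H(L)` is an Osborn loop, then for all `x, y ∈ L` and all
`φ ∈ A(L)`: `(x·(y·x))·(x^λ·φ⁻¹(x)) = x·(y·φ⁻¹(x))` and
`(φ⁻¹(x))^λ·x = (x^λ·φ⁻¹(x))^λ`. -/
theorem holomorph_osborn_identities_phi_mid {L : Type*} (Q : Loop L)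
    (A : Subgroup (Equiv.Perm L)) (hA : A ≤ Q.autGroup) :
    (Q.Holomorph A hA).IsOsborn →
      ∀ (x y : L) (φ : A),
        Q.mul (Q.mul x (Q.mul y x)) (Q.mul (Q.linv x) (((φ⁻¹ : A) : Equiv.Perm L) x)) = Q.mul x (Q.mul y (((φ⁻¹ : A) : Equiv.Perm L) x)) ∧
        Q.mul (Q.linv (((φ⁻¹ : A) : Equiv.Perm L) x)) x = Q.linv (Q.mul (Q.linv x) (((φ⁻¹ : A) : Equiv.Perm L) x)) :=
  fun hO x y φ => ⟨hO.mul_mul_linv_mul φ⁻¹ x y, hO.linv_mul_eq_linv φ⁻¹ x⟩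
end

section
/- Let (L,·) be a loop, A(L) a subgroup of its automorphism group, and H(L) the A(L)-holomorph of (L,·). If H(L) is an Osborn loop, then for every x ∈ L and all α ∈ A(L) the triples (U, I, U) with U : y ↦ α(x)·(x\y), and (V, I, V) with V : y ↦ (α(x)·x^ρ)·y, are autotopisms of (L,·). -/
/-!
Evaluating the Osborn law of the holomorph at `(β,x)`, `(β,y)`, `(β⁻¹,β⁻¹z)` gives, in `L`,
`β(x)·((y·z)·x) = (β(x)·((y·x^λ)·x))·(z·x)`. For `β = 1` this makes `y ↦ x·((y·x^λ)·x)`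
surjective; comparing with the identity for `β = α` then shows that `w ↦ α(x)·(x\(u·w))` is
left multiplication by `α(x)·(x\u)`. With `u = e` this gives `U = V = L_c` for
`c = α(x)·x^ρ`, and `c` lies in the left nucleus.
-/

namespace Loop

variable {L : Type*} (Q : Loop L)

theorem bijective_mul_left (a : L) : Function.Bijective (Q.mul a) :=
  Function.bijective_iff_has_inverse.mpr
    ⟨Q.ldiv a, fun y => Q.ldiv_mul a y, fun y => Q.mul_ldiv a y⟩

theorem isAutotopism_mul_left_of_inNlambda {a : L} (ha : Q.InNlambda a) :
    Q.IsAutotopism (Q.mul a) id (Q.mul a) :=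
  ⟨Q.bijective_mul_left a, Function.bijective_id, Q.bijective_mul_left a,
    fun y z => (ha y z).symm⟩

def IsOsbornAt (q p : L) : Prop :=
  ∀ y z, Q.mul q (Q.mul (Q.mul y z) p) =
    Q.mul (Q.mul q (Q.mul (Q.mul y (Q.linv p)) p)) (Q.mul z p)

theorem isOsbornAt_of_isOsborn_holomorph {A : Subgroup (Equiv.Perm L)} (hA : A ≤ Q.autGroup)
    (hO : (Q.Holomorph A hA).IsOsborn) (β : A) (x : L) :
    Q.IsOsbornAt ((β : Equiv.Perm L) x) x := by
  intro y z
  have hβ : ∀ u v, (β : Equiv.Perm L) (Q.mul u v) =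
      Q.mul ((β : Equiv.Perm L) u) ((β : Equiv.Perm L) v) := hA β.2
  simpa only [Holomorph, linv, one_mul, mul_inv_cancel, inv_mul_cancel,
    OneMemClass.coe_one, Equiv.Perm.one_apply, hβ, InvMemClass.coe_inv, Equiv.Perm.inv_def,
    Equiv.apply_symm_apply] using
    congrArg Prod.snd (hO (β, x) (β, y) (β⁻¹, (β : Equiv.Perm L)⁻¹ z))

variable {Q}

theorem IsOsbornAt.mul_ldiv_mul {p q : L} (hq : Q.IsOsbornAt q p) (hp : Q.IsOsbornAt p p)
    (u v : L) : Q.mul (Q.mul q (Q.ldiv p u)) v = Q.mul q (Q.ldiv p (Q.mul u v)) := by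
  -- `y ↦ p·((y·p^λ)·p)` is onto: `b` is a preimage of `u`.
  set b := Q.rdiv (Q.ldiv p (Q.mul u p)) p
  have hb : Q.mul p (Q.mul (Q.mul b (Q.linv p)) p) = u := by
    have h := hp b Q.e
    rw [Q.mul_e, Q.e_mul, Q.rdiv_mul, Q.mul_ldiv] at h
    simpa only [Q.mul_rdiv] using (congrArg (fun w => Q.rdiv w p) h).symm
  have hpb : ∀ w, Q.mul (Q.mul b (Q.rdiv w p)) p = Q.ldiv p (Q.mul u w) := by
    intro w
    rw [← Q.ldiv_mul p (Q.mul (Q.mul b _) p), hp, hb, Q.rdiv_mul]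
  have hc : ∀ w, Q.mul q (Q.ldiv p (Q.mul u w)) =
      Q.mul (Q.mul q (Q.mul (Q.mul b (Q.linv p)) p)) w := by
    intro w
    rw [← hpb, hq, Q.rdiv_mul]
  have hu := hc Q.e
  rw [Q.mul_e, Q.mul_e] at hu
  rw [hc, hu]

theorem IsOsbornAt.mul_ldiv_eq_mul_rinv_mul {p q : L} (hq : Q.IsOsbornAt q p)
    (hp : Q.IsOsbornAt p p) (v : L) : Q.mul q (Q.ldiv p v) = Q.mul (Q.mul q (Q.rinv p)) v := by
  rw [rinv, hq.mul_ldiv_mul hp, Q.e_mul]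

theorem IsOsbornAt.inNlambda_mul_rinv {p q : L} (hq : Q.IsOsbornAt q p)
    (hp : Q.IsOsbornAt p p) : Q.InNlambda (Q.mul q (Q.rinv p)) := by
  intro y z
  rw [← hq.mul_ldiv_eq_mul_rinv_mul hp, ← hq.mul_ldiv_eq_mul_rinv_mul hp, hq.mul_ldiv_mul hp]

end Loop

/-- If `H(L)` is an Osborn loop, then for every `x ∈ L` and all
`α ∈ A(L)` the triples `(U, I, U)` with `U : y ↦ α(x)·(x\y)` and `(V, I, V)` with
`V : y ↦ (α(x)·x^ρ)·y` are autotopisms of `(L,·)`. -/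
theorem holomorph_osborn_lambda_autotopisms {L : Type*} (Q : Loop L)
    (A : Subgroup (Equiv.Perm L)) (hA : A ≤ Q.autGroup) :
    (Q.Holomorph A hA).IsOsborn →
      ∀ (x : L) (α : A),
        Q.IsAutotopism (fun y => Q.mul ((α : Equiv.Perm L) x) (Q.ldiv x y)) id
          (fun y => Q.mul ((α : Equiv.Perm L) x) (Q.ldiv x y)) ∧
        Q.IsAutotopism (fun y => Q.mul (Q.mul ((α : Equiv.Perm L) x) (Q.rinv x)) y) id
          (fun y => Q.mul (Q.mul ((α : Equiv.Perm L) x) (Q.rinv x)) y) := by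
  intro hO x α
  have hx : Q.IsOsbornAt x x := Q.isOsbornAt_of_isOsborn_holomorph hA hO 1 x
  have hαx := Q.isOsbornAt_of_isOsborn_holomorph hA hO α x
  have hU : (fun y => Q.mul ((α : Equiv.Perm L) x) (Q.ldiv x y)) =
      Q.mul (Q.mul ((α : Equiv.Perm L) x) (Q.rinv x)) :=
    funext (hαx.mul_ldiv_eq_mul_rinv_mul hx)
  have hV := Q.isAutotopism_mul_left_of_inNlambda (hαx.inNlambda_mul_rinv hx)
  rw [hU]
  exact ⟨hV, hV⟩
end
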